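/- Let 0 < α < 1 and r > 0. Define the truncated Riesz potential kernel g_α^{r²}(z) := (1/Γ(α)) ∫₀^{r²} t^{α-1} (4πt)^{-1} exp(-|z|²/(4t)) dt and the full kernel G_α(z) := (1/Γ(α)) ∫₀^∞ t^{α-1} (4πt)^{-1} exp(-|z|²/(4t)) dt. Then for every z ∈ ℂ \ {0}: g_α^{r²}(z) ≤ 2^{1-α} exp(-|z|²/(8r²)) G_α(z). -/

import Mathlib

open Real MeasureTheory Complex intervalIntegral

/-!
Writing `a = |z|²/4`, the kernel is `(4π)⁻¹ t^(α-2) exp(-a/t)`. On `0 < t ≤ r²` the bound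
`a/(2r²) ≤ a/(2t)` splits `exp(-a/t) ≤ exp(-a/(2r²)) exp(-a/(2t))`; extending the remaining
integral to `(0, ∞)` and substituting `t ↦ 2t` turns `exp(-a/(2t))` back into `exp(-a/t)`
at the cost of the factor `2^(1-α)`.
-/

section RpowMulExpNegDiv

variable {s a : ℝ}

theorem integrableOn_rpow_mul_exp_neg_div (hs : s < -1) (ha : 0 < a) :
    IntegrableOn (fun t : ℝ => t ^ s * Real.exp (-a / t)) (Set.Ioi 0) := by
  -- substituting `t = x⁻¹` gives the Gamma-type integrand `x ^ (-s-2) * exp (-a * x)`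
  rw [← integrableOn_Ioi_comp_rpow_iff' _ (p := -1) (by norm_num)]
  refine (integrableOn_rpow_mul_exp_neg_mul_rpow (s := -s - 2) (p := 1) (by linarith) one_pos
    ha).congr_fun (fun x hx => ?_) measurableSet_Ioi
  have hx : 0 < x := hx
  dsimp only
  rw [smul_eq_mul, rpow_neg_one, rpow_one, inv_rpow hx.le, ← rpow_neg hx.le, div_inv_eq_mul,
    neg_mul, ← mul_assoc, ← rpow_add hx]
  ring_nf

theorem integral_rpow_mul_exp_neg_div_mul (s a : ℝ) {b : ℝ} (hb : 0 < b) :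
    ∫ t in Set.Ioi (0 : ℝ), t ^ s * Real.exp (-a / (b * t)) =
      b ^ (-s - 1) * ∫ t in Set.Ioi (0 : ℝ), t ^ s * Real.exp (-a / t) := by
  have hscale : ∀ t ∈ Set.Ioi (0 : ℝ),
      t ^ s * Real.exp (-a / (b * t)) = b ^ (-s) * ((b * t) ^ s * Real.exp (-a / (b * t))) := by
    intro t ht
    rw [mul_rpow hb.le (le_of_lt ht), ← mul_assoc, ← mul_assoc, ← rpow_add hb, neg_add_cancel,
      rpow_zero, one_mul]
  rw [setIntegral_congr_fun measurableSet_Ioi hscale, MeasureTheory.integral_const_mul,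
    integral_comp_mul_left_Ioi (fun u => u ^ s * Real.exp (-a / u)) 0 hb, mul_zero, smul_eq_mul,
    ← mul_assoc, ← rpow_neg_one, ← rpow_add hb]
  ring_nf

theorem exp_neg_div_le_mul (ha : 0 ≤ a) {t ρ : ℝ} (ht : 0 < t) (htρ : t ≤ ρ) :
    Real.exp (-a / t) ≤ Real.exp (-a / (2 * ρ)) * Real.exp (-a / (2 * t)) := by
  have hdiv : a / (2 * ρ) ≤ a / (2 * t) := by gcongr
  rw [← Real.exp_add, Real.exp_le_exp, neg_div, neg_div, neg_div,
    show a / t = a / (2 * t) + a / (2 * t) by field_simp; ring]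
  linarith

theorem setIntegral_Ioc_rpow_mul_exp_neg_div_le (hs : s < -1) (ha : 0 < a) (ρ : ℝ) :
    ∫ t in Set.Ioc 0 ρ, t ^ s * Real.exp (-a / t) ≤
      2 ^ (-s - 1) * Real.exp (-a / (2 * ρ)) *
        ∫ t in Set.Ioi (0 : ℝ), t ^ s * Real.exp (-a / t) := by
  have hhalf : ∀ t : ℝ, -(a / 2) / t = -a / (2 * t) := fun t => by ring
  have hint : IntegrableOn (fun t : ℝ => t ^ s * Real.exp (-a / (2 * t))) (Set.Ioi 0) := by
    simpa only [hhalf] using integrableOn_rpow_mul_exp_neg_div hs (a := a / 2) (by positivity)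
  calc ∫ t in Set.Ioc 0 ρ, t ^ s * Real.exp (-a / t)
      ≤ ∫ t in Set.Ioc 0 ρ, Real.exp (-a / (2 * ρ)) * (t ^ s * Real.exp (-a / (2 * t))) := by
        refine setIntegral_mono_on
          ((integrableOn_rpow_mul_exp_neg_div hs ha).mono_set Set.Ioc_subset_Ioi_self)
          (IntegrableOn.mono_set (hint.const_mul _) Set.Ioc_subset_Ioi_self) measurableSet_Ioc
          (fun t ht => ?_)
        rw [mul_left_comm]
        exact mul_le_mul_of_nonneg_left (exp_neg_div_le_mul ha.le ht.1 ht.2)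
          (rpow_nonneg ht.1.le _)
    _ = Real.exp (-a / (2 * ρ)) * ∫ t in Set.Ioc 0 ρ, t ^ s * Real.exp (-a / (2 * t)) :=
        MeasureTheory.integral_const_mul _ _
    _ ≤ Real.exp (-a / (2 * ρ)) * ∫ t in Set.Ioi 0, t ^ s * Real.exp (-a / (2 * t)) := by
        refine mul_le_mul_of_nonneg_left
          (setIntegral_mono_set hint ?_ Set.Ioc_subset_Ioi_self.eventuallyLE) (Real.exp_nonneg _)
        filter_upwards [self_mem_ae_restrict measurableSet_Ioi] with t ht
        exact mul_nonneg (rpow_nonneg (le_of_lt ht) _) (Real.exp_nonneg _)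
    _ = 2 ^ (-s - 1) * Real.exp (-a / (2 * ρ)) *
          ∫ t in Set.Ioi (0 : ℝ), t ^ s * Real.exp (-a / t) := by
        rw [integral_rpow_mul_exp_neg_div_mul s a two_pos]
        ring

end RpowMulExpNegDiv

theorem rpow_mul_heatKernel_eq (α c : ℝ) {t : ℝ} (ht : 0 < t) :
    t ^ (α - 1) * ((4 * π * t)⁻¹ * Real.exp (-c / (4 * t))) =
      (4 * π)⁻¹ * (t ^ (α - 2) * Real.exp (-(c / 4) / t)) := by
  rw [show α - 2 = α - 1 - 1 by ring, rpow_sub_one ht.ne' (α - 1),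
    show -(c / 4) / t = -c / (4 * t) by ring, mul_inv]
  ring

theorem truncated_riesz_potential_bound (α r : ℝ) (hα0 : 0 < α) (hα1 : α < 1)
    (z : ℂ) (hz : z ≠ 0) :
    (1 / Real.Gamma α) * ∫ t in (0:ℝ)..(r ^ 2),
        t ^ (α - 1) * ((4 * π * t)⁻¹ * Real.exp (-(‖z‖ ^ 2) / (4 * t))) ≤
      2 ^ (1 - α) * Real.exp (-(‖z‖ ^ 2) / (8 * r ^ 2)) *
        ((1 / Real.Gamma α) * ∫ t in Set.Ioi (0:ℝ),
          t ^ (α - 1) * ((4 * π * t)⁻¹ * Real.exp (-(‖z‖ ^ 2) / (4 * t)))) := by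
  have hΓ : 0 < Real.Gamma α := Real.Gamma_pos_of_pos hα0
  have key := setIntegral_Ioc_rpow_mul_exp_neg_div_le (s := α - 2) (a := ‖z‖ ^ 2 / 4)
    (by linarith) (by positivity) (r ^ 2)
  rw [show -(α - 2) - 1 = 1 - α by ring,
    show -(‖z‖ ^ 2 / 4) / (2 * r ^ 2) = -(‖z‖ ^ 2) / (8 * r ^ 2) by ring] at key
  rw [integral_of_le (sq_nonneg r),
    setIntegral_congr_fun measurableSet_Ioc (fun t ht => rpow_mul_heatKernel_eq α _ ht.1),
    setIntegral_congr_fun measurableSet_Ioi (fun t ht => rpow_mul_heatKernel_eq α _ ht),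
    MeasureTheory.integral_const_mul, MeasureTheory.integral_const_mul]
  calc 1 / Real.Gamma α * ((4 * π)⁻¹ * ∫ t in Set.Ioc 0 (r ^ 2),
        t ^ (α - 2) * Real.exp (-(‖z‖ ^ 2 / 4) / t))
      ≤ 1 / Real.Gamma α * ((4 * π)⁻¹ *
          (2 ^ (1 - α) * Real.exp (-(‖z‖ ^ 2) / (8 * r ^ 2)) *
            ∫ t in Set.Ioi 0, t ^ (α - 2) * Real.exp (-(‖z‖ ^ 2 / 4) / t))) := by
        gcongr
    _ = _ := by ring
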